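/- For every real τ > 0 and every C ∈ ℝ, ∫_0^∞ r^τ · exp(−(r + C)²/2) dr ≤ a_τ · exp(−b_τ · C), where a_τ = √π · Γ(τ+1) / (2^{(τ+1)/2} · Γ((τ+2)/2)) and b_τ = √2 · Γ((τ+2)/2) / Γ((τ+1)/2), and Γ denotes the Gamma function. -/

import Mathlib

open Real MeasureTheory Set Filter

noncomputable def Fg (s C : ℝ) : ℝ := ∫ r in Set.Ioi (0:ℝ), r ^ s * Real.exp (-(r + C) ^ 2 / 2)

lemma integrableOn_base {s : ℝ} (C : ℝ) (hs : -1 < s) :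
    IntegrableOn (fun r : ℝ => r ^ s * Real.exp (-(r + C) ^ 2 / 2)) (Set.Ioi 0) := by
  have h := (integrableOn_rpow_mul_exp_neg_mul_sq (by norm_num : (0:ℝ) < 1/4) hs).const_mul
      (Real.exp (C ^ 2 / 2))
  refine h.mono' ?_ ?_
  · refine (ContinuousOn.mul ?_ (by fun_prop)).aestronglyMeasurable measurableSet_Ioi
    exact fun x hx => (Real.continuousAt_rpow_const x s (Or.inl (ne_of_gt hx))).continuousWithinAt
  · filter_upwards [ae_restrict_mem measurableSet_Ioi] with x hx
    have hx0 : (0:ℝ) < x := hx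
    rw [Real.norm_eq_abs, abs_mul, abs_of_nonneg (Real.rpow_nonneg hx0.le s),
      abs_of_nonneg (Real.exp_pos _).le]
    rw [mul_comm (Real.exp (C^2/2)) _, mul_assoc]
    refine mul_le_mul_of_nonneg_left ?_ (Real.rpow_nonneg hx0.le s)
    rw [← Real.exp_add]
    apply Real.exp_le_exp.2
    nlinarith [sq_nonneg (x + 2*C)]

lemma integrableOn_lin {s : ℝ} (C : ℝ) (hs : -1 < s) :
    IntegrableOn (fun r : ℝ => r ^ s * (r + C) * Real.exp (-(r + C) ^ 2 / 2)) (Set.Ioi 0) := by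
  refine IntegrableOn.congr_fun
    (((integrableOn_base C (by linarith : (-1:ℝ) < s + 1)).add
      ((integrableOn_base C hs).const_mul C)) : IntegrableOn _ _ _)
    (fun x hx => ?_) measurableSet_Ioi
  have hx0 : x ≠ 0 := ne_of_gt hx
  simp only [Pi.add_apply]
  rw [Real.rpow_add_one hx0]
  ring

lemma Fg_zero (s : ℝ) (hs : -1 < s) :
    Fg s 0 = 2 ^ ((s - 1) / 2) * Real.Gamma ((s + 1) / 2) := by
  have h2 : (0:ℝ) < 2 := by norm_num
  have key := MeasureTheory.integral_comp_rpow_Ioi_of_pos (p := 2)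
      (g := fun y : ℝ => (y ^ ((s + 1) / 2 - 1) * Real.exp (-(1/2 * y))) / 2) h2
  have hL : Fg s 0 = ∫ x in Set.Ioi (0:ℝ),
      (2 * x ^ ((2:ℝ) - 1)) • (((x ^ (2:ℝ)) ^ ((s + 1) / 2 - 1) * Real.exp (-(1/2 * x ^ (2:ℝ)))) / 2) := by
    refine MeasureTheory.setIntegral_congr_fun measurableSet_Ioi (fun x hx => ?_)
    have hx0 : (0:ℝ) < x := hx
    rw [smul_eq_mul, ← Real.rpow_mul hx0.le]
    rw [show (2:ℝ) - 1 = 1 by norm_num, Real.rpow_one]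
    rw [show (2:ℝ) * ((s+1)/2 - 1) = s - 1 by ring]
    rw [show -(1/2 * x ^ (2:ℝ)) = -(x + 0) ^ 2 / 2 by
      rw [Real.rpow_two]; ring]
    rw [show 2 * x * (x ^ (s - 1) * Real.exp (-(x + 0) ^ 2 / 2) / 2)
        = (x ^ (s-1) * x) * Real.exp (-(x + 0) ^ 2 / 2) by ring,
      ← Real.rpow_add_one (ne_of_gt hx0), show s - 1 + 1 = s by ring]
  rw [hL, key, MeasureTheory.integral_div,
    integral_rpow_mul_exp_neg_mul_Ioi (by linarith : 0 < (s+1)/2) (by norm_num : (0:ℝ) < 1/2)]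
  rw [show (1:ℝ)/(1/2) = 2 by norm_num]
  rw [show (s-1)/2 = (s+1)/2 - 1 by ring, Real.rpow_sub h2, Real.rpow_one]
  ring

lemma aesm_base (s C : ℝ) :
    AEStronglyMeasurable (fun r : ℝ => r ^ s * Real.exp (-(r + C) ^ 2 / 2))
      (MeasureTheory.volume.restrict (Set.Ioi 0)) := by
  refine (ContinuousOn.mul ?_ (by fun_prop)).aestronglyMeasurable measurableSet_Ioi
  exact fun x hx => (Real.continuousAt_rpow_const x s (Or.inl (ne_of_gt hx))).continuousWithinAt

lemma hasDerivAt_exp_part (r x : ℝ) :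
    HasDerivAt (fun y : ℝ => Real.exp (-(r + y) ^ 2 / 2))
      (-((r + x) * Real.exp (-(r + x) ^ 2 / 2))) x := by
  have h1 : HasDerivAt (fun y : ℝ => -(r + y) ^ 2 / 2) (-(r + x)) x := by
    have := (((hasDerivAt_id x).const_add r).pow 2).neg.div_const 2
    refine this.congr_deriv ?_
    simp; ring
  have := h1.exp
  convert this using 1
  ring

lemma hasDerivAt_Fg (τ : ℝ) (hτ : 0 < τ) (C₀ : ℝ) :
    HasDerivAt (fun C => Fg τ C)
      (-∫ r in Set.Ioi (0:ℝ), r ^ τ * (r + C₀) * Real.exp (-(r + C₀) ^ 2 / 2)) C₀ := by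
  set K : ℝ := |C₀| + 1 with hK
  have hK0 : 0 < K := by positivity
  have hτ' : (-1:ℝ) < τ := by linarith
  have main := hasDerivAt_integral_of_dominated_loc_of_deriv_le
    (μ := MeasureTheory.volume.restrict (Set.Ioi 0)) (x₀ := C₀) (s := Metric.ball C₀ 1) (Metric.ball_mem_nhds C₀ (by norm_num))
    (F := fun x r => r ^ τ * Real.exp (-(r + x) ^ 2 / 2))
    (F' := fun x r => -(r ^ τ * (r + x) * Real.exp (-(r + x) ^ 2 / 2)))
    (bound := fun r => Real.exp (K ^ 2 / 2) *
      (r ^ (τ+1) * Real.exp (-(r + -K) ^ 2 / 2) + K * (r ^ τ * Real.exp (-(r + -K) ^ 2 / 2))))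
    (Filter.Eventually.of_forall (fun x => aesm_base τ x))
    (integrableOn_base C₀ hτ')
    ((integrableOn_lin C₀ hτ').neg.aestronglyMeasurable)
    ?_ ?_ ?_
  · have h := main.2
    rw [MeasureTheory.integral_neg] at h
    exact h
  · -- bound
    filter_upwards [MeasureTheory.ae_restrict_mem measurableSet_Ioi] with r hr x hx
    have hr0 : (0:ℝ) < r := hr
    have hxK : -K ≤ x ∧ x ≤ K := by
      rw [Metric.mem_ball, Real.dist_eq] at hx
      constructor <;> [skip; skip] <;> cases' abs_lt.1 hx with h1 h2 <;>
        cases' abs_le.1 (le_refl |C₀|) with h3 h4 <;> simp only [hK] <;> linarith [neg_abs_le C₀, le_abs_self C₀]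
    rw [norm_neg, Real.norm_eq_abs, abs_mul, abs_mul,
      abs_of_nonneg (Real.rpow_nonneg hr0.le τ), abs_of_nonneg (Real.exp_pos _).le]
    have h1 : |r + x| ≤ r + K := by
      rw [abs_le]; constructor <;> nlinarith [hxK.1, hxK.2]
    have h2 : Real.exp (-(r + x) ^ 2 / 2) ≤ Real.exp (K ^ 2 / 2) * Real.exp (-(r + -K) ^ 2 / 2) := by
      rw [← Real.exp_add]
      apply Real.exp_le_exp.2
      nlinarith [mul_nonneg hr0.le (by linarith [hxK.1] : (0:ℝ) ≤ x + K), sq_nonneg x]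
    calc r ^ τ * |r + x| * Real.exp (-(r + x) ^ 2 / 2)
        ≤ r ^ τ * (r + K) * (Real.exp (K ^ 2 / 2) * Real.exp (-(r + -K) ^ 2 / 2)) := by
          apply mul_le_mul (mul_le_mul_of_nonneg_left h1 (Real.rpow_nonneg hr0.le τ)) h2
            (Real.exp_pos _).le
          positivity
      _ = Real.exp (K ^ 2 / 2) *
          (r ^ (τ+1) * Real.exp (-(r + -K) ^ 2 / 2) + K * (r ^ τ * Real.exp (-(r + -K) ^ 2 / 2))) := by
          rw [Real.rpow_add_one (ne_of_gt hr0)]; ring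
  · -- bound integrable
    exact (((integrableOn_base (-K) (by linarith : (-1:ℝ) < τ + 1)).add
      ((integrableOn_base (-K) hτ').const_mul K)).const_mul (Real.exp (K ^ 2 / 2)))
  · -- differentiability
    filter_upwards [MeasureTheory.ae_restrict_mem measurableSet_Ioi] with r hr x _
    have := (hasDerivAt_exp_part r x).const_mul (r ^ τ)
    refine this.congr_deriv ?_
    ring

lemma ibp (τ C : ℝ) (hτ : 0 < τ) :
    ∫ r in Set.Ioi (0:ℝ), r ^ τ * (r + C) * Real.exp (-(r + C) ^ 2 / 2) = τ * Fg (τ - 1) C := by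
  have hτ' : (-1:ℝ) < τ - 1 := by linarith
  have hint1 : MeasureTheory.IntegrableOn
      (fun r : ℝ => τ * (r ^ (τ-1) * Real.exp (-(r + C) ^ 2 / 2))) (Set.Ioi 0) :=
    (integrableOn_base C hτ').const_mul τ
  have hint2 := integrableOn_lin C (by linarith : (-1:ℝ) < τ)
  have key := MeasureTheory.integral_Ioi_of_hasDerivAt_of_tendsto (a := (0:ℝ)) (m := (0:ℝ))
    (f := fun r => r ^ τ * Real.exp (-(r + C) ^ 2 / 2))
    (f' := fun r => τ * (r ^ (τ-1) * Real.exp (-(r + C) ^ 2 / 2))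
      - r ^ τ * (r + C) * Real.exp (-(r + C) ^ 2 / 2)) ?_ ?_ (hint1.sub hint2) ?_
  · have h0 : ((0:ℝ) ^ τ * Real.exp (-((0:ℝ) + C) ^ 2 / 2)) = 0 := by
      rw [Real.zero_rpow (ne_of_gt hτ)]; ring
    rw [h0, sub_zero] at key
    have := MeasureTheory.integral_sub hint1 hint2
    rw [key] at this
    rw [Fg]
    rw [MeasureTheory.integral_const_mul] at this
    linarith [this]
  · -- continuity at 0
    apply ContinuousWithinAt.mul
    · exact (Real.continuousAt_rpow_const 0 τ (Or.inr hτ.le)).continuousWithinAt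
    · exact (by fun_prop : Continuous fun r : ℝ => Real.exp (-(r + C) ^ 2 / 2)).continuousWithinAt
  · -- derivative on Ioi
    intro x hx
    have hx0 : (0:ℝ) < x := hx
    have h1 : HasDerivAt (fun r : ℝ => r ^ τ) (τ * x ^ (τ - 1)) x :=
      Real.hasDerivAt_rpow_const (Or.inl (ne_of_gt hx0))
    have h2 : HasDerivAt (fun y : ℝ => Real.exp (-(y + C) ^ 2 / 2))
        (-((x + C) * Real.exp (-(x + C) ^ 2 / 2))) x := by
      simpa [add_comm] using hasDerivAt_exp_part C x
    have := h1.mul h2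
    refine this.congr_deriv ?_
    ring
  · -- tendsto 0 at top
    have hmaj : Filter.Tendsto (fun r : ℝ => Real.exp (C ^ 2 / 2) * (r ^ τ * Real.exp (-(1/4) * r)))
        Filter.atTop (nhds 0) := by
      have := tendsto_rpow_mul_exp_neg_mul_atTop_nhds_zero τ (1/4) (by norm_num)
      simpa using this.const_mul (Real.exp (C ^ 2 / 2))
    refine squeeze_zero' ?_ ?_ hmaj
    · filter_upwards [Filter.eventually_ge_atTop (0:ℝ)] with r hr
      positivity
    · filter_upwards [Filter.eventually_ge_atTop (1:ℝ)] with r hr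
      have hr0 : (0:ℝ) ≤ r := by linarith
      rw [mul_comm (Real.exp (C^2/2)) _, mul_assoc]
      refine mul_le_mul_of_nonneg_left ?_ (Real.rpow_nonneg hr0 τ)
      rw [← Real.exp_add]
      apply Real.exp_le_exp.2
      nlinarith [sq_nonneg (r + 2*C), sq_nonneg r]

lemma pointwise_swap (τ C1 C2 r s : ℝ) (h12 : C1 ≤ C2) (hr : 0 < r) (hs : 0 < s) :
    0 ≤ (r ^ (τ-1) * Real.exp (-(r + C2) ^ 2 / 2) * (s ^ τ * Real.exp (-(s + C1) ^ 2 / 2))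
          - r ^ (τ-1) * Real.exp (-(r + C1) ^ 2 / 2) * (s ^ τ * Real.exp (-(s + C2) ^ 2 / 2)))
        + (s ^ (τ-1) * Real.exp (-(s + C2) ^ 2 / 2) * (r ^ τ * Real.exp (-(r + C1) ^ 2 / 2))
          - s ^ (τ-1) * Real.exp (-(s + C1) ^ 2 / 2) * (r ^ τ * Real.exp (-(r + C2) ^ 2 / 2))) := by
  have ht : ∀ x : ℝ, 0 < x → x ^ τ = x ^ (τ-1) * x := by
    intro x hx
    rw [← Real.rpow_add_one (ne_of_gt hx)]; norm_num
  rw [ht r hr, ht s hs]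
  have hkey : 0 ≤ (s - r) * (Real.exp (-(r + C2) ^ 2 / 2) * Real.exp (-(s + C1) ^ 2 / 2)
      - Real.exp (-(r + C1) ^ 2 / 2) * Real.exp (-(s + C2) ^ 2 / 2)) := by
    rcases le_total r s with h | h
    · refine mul_nonneg (by linarith) (sub_nonneg.2 ?_)
      rw [← Real.exp_add, ← Real.exp_add]
      apply Real.exp_le_exp.2
      nlinarith [mul_nonneg (sub_nonneg.2 h) (sub_nonneg.2 h12)]
    · have hle : Real.exp (-(r + C2) ^ 2 / 2) * Real.exp (-(s + C1) ^ 2 / 2)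
          ≤ Real.exp (-(r + C1) ^ 2 / 2) * Real.exp (-(s + C2) ^ 2 / 2) := by
        rw [← Real.exp_add, ← Real.exp_add]
        apply Real.exp_le_exp.2
        nlinarith [mul_nonneg (sub_nonneg.2 h) (sub_nonneg.2 h12)]
      nlinarith [mul_nonneg (sub_nonneg.2 h) (sub_nonneg.2 hle)]
  have hRS : 0 ≤ r ^ (τ-1) * s ^ (τ-1) :=
    mul_nonneg (Real.rpow_nonneg hr.le _) (Real.rpow_nonneg hs.le _)
  nlinarith [mul_nonneg hRS hkey]

lemma swap_mono (τ C1 C2 : ℝ) (hτ : 0 < τ) (h12 : C1 ≤ C2) :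
    Fg (τ - 1) C1 * Fg τ C2 ≤ Fg (τ - 1) C2 * Fg τ C1 := by
  have hτ' : (-1:ℝ) < τ - 1 := by linarith
  have hτ'' : (-1:ℝ) < τ := by linarith
  set μ := MeasureTheory.volume.restrict (Set.Ioi (0:ℝ)) with hμ
  set f : ℝ → ℝ → ℝ := fun c r => r ^ (τ-1) * Real.exp (-(r + c) ^ 2 / 2) with hf
  set g : ℝ → ℝ → ℝ := fun c r => r ^ τ * Real.exp (-(r + c) ^ 2 / 2) with hg
  set Φ : ℝ × ℝ → ℝ := fun p => f C2 p.1 * g C1 p.2 - f C1 p.1 * g C2 p.2 with hΦ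
  have hint : ∀ c c' : ℝ, MeasureTheory.Integrable (fun p : ℝ × ℝ => f c p.1 * g c' p.2) (μ.prod μ) :=
    fun c c' => MeasureTheory.Integrable.mul_prod (integrableOn_base c hτ') (integrableOn_base c' hτ'')
  have hΦint : MeasureTheory.Integrable Φ (μ.prod μ) := (hint C2 C1).sub (hint C1 C2)
  have hswap : ∫ p, Φ p.swap ∂(μ.prod μ) = ∫ p, Φ p ∂(μ.prod μ) :=
    MeasureTheory.integral_prod_swap Φ
  have hae : 0 ≤ ∫ p, (Φ p + Φ p.swap) ∂(μ.prod μ) := by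
    refine MeasureTheory.integral_nonneg_of_ae ?_
    have hprod : μ.prod μ = (MeasureTheory.volume.prod MeasureTheory.volume).restrict
        ((Set.Ioi 0) ×ˢ (Set.Ioi 0)) := MeasureTheory.Measure.prod_restrict _ _
    rw [hprod]
    filter_upwards [MeasureTheory.ae_restrict_mem (measurableSet_Ioi.prod measurableSet_Ioi)]
      with p hp
    exact pointwise_swap τ C1 C2 p.1 p.2 h12 hp.1 hp.2
  have h2 : (0:ℝ) ≤ 2 * ∫ p, Φ p ∂(μ.prod μ) := by
    have hadd : ∫ p, (Φ p + Φ p.swap) ∂(μ.prod μ)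
        = (∫ p, Φ p ∂(μ.prod μ)) + ∫ p, Φ p.swap ∂(μ.prod μ) :=
      MeasureTheory.integral_add hΦint hΦint.swap
    rw [hadd, hswap] at hae
    linarith
  have hΦval : ∫ p, Φ p ∂(μ.prod μ) = Fg (τ-1) C2 * Fg τ C1 - Fg (τ-1) C1 * Fg τ C2 := by
    rw [hΦ]
    rw [MeasureTheory.integral_sub (hint C2 C1) (hint C1 C2),
      MeasureTheory.integral_prod_mul, MeasureTheory.integral_prod_mul]
    rfl
  rw [hΦval] at h2
  linarith

lemma Fg_le (τ C : ℝ) (hτ : 0 < τ) :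
    Fg τ C ≤ Fg τ 0 * Real.exp (-(τ * Fg (τ-1) 0 / Fg τ 0) * C) := by
  have hτ1 : (-1:ℝ) < τ - 1 := by linarith
  have hF0 : 0 < Fg τ 0 := by
    rw [Fg_zero τ (by linarith)]
    have : 0 < Real.Gamma ((τ+1)/2) := Real.Gamma_pos_of_pos (by linarith)
    positivity
  set b : ℝ := τ * Fg (τ-1) 0 / Fg τ 0 with hb
  set g : ℝ → ℝ := fun C => Fg τ C * Real.exp (b * C) with hg
  have hder : ∀ x : ℝ, HasDerivAt g
      ((-(τ * Fg (τ-1) x)) * Real.exp (b * x) + Fg τ x * (b * Real.exp (b * x))) x := by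
    intro x
    have h1 : HasDerivAt (fun C => Fg τ C) (-(τ * Fg (τ-1) x)) x := by
      have := hasDerivAt_Fg τ hτ x
      rwa [ibp τ x hτ] at this
    have h2 : HasDerivAt (fun C : ℝ => Real.exp (b * C)) (b * Real.exp (b * x)) x := by
      have := ((hasDerivAt_id x).const_mul b).exp
      simpa [mul_comm] using this
    exact h1.mul h2
  have hkey : ∀ x : ℝ, 0 ≤ x →
      deriv g x = (-(τ * Fg (τ-1) x)) * Real.exp (b * x) + Fg τ x * (b * Real.exp (b * x)) :=
    fun x _ => (hder x).deriv
  -- deriv sign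
  have hsign : ∀ x : ℝ, (0 ≤ x → deriv g x ≤ 0) ∧ (x ≤ 0 → 0 ≤ deriv g x) := by
    intro x
    rw [(hder x).deriv]
    constructor
    · intro hx
      have hs := swap_mono τ 0 x hτ hx
      have hineq : b * Fg τ x ≤ τ * Fg (τ-1) x := by
        rw [hb, div_mul_eq_mul_div, div_le_iff₀ hF0]
        nlinarith [hs]
      nlinarith [Real.exp_pos (b * x), hineq]
    · intro hx
      have hs := swap_mono τ x 0 hτ hx
      have hineq : τ * Fg (τ-1) x ≤ b * Fg τ x := by
        rw [hb, div_mul_eq_mul_div, le_div_iff₀ hF0]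
        nlinarith [hs]
      nlinarith [Real.exp_pos (b * x), hineq]
  have hcont : Continuous g := by
    apply continuous_iff_continuousAt.2
    exact fun x => (hder x).differentiableAt.continuousAt
  have hmax : g C ≤ g 0 := by
    rcases le_total 0 C with hC | hC
    · have hanti : AntitoneOn g (Set.Ici 0) := by
        refine antitoneOn_of_deriv_nonpos (convex_Ici 0) hcont.continuousOn
          (fun x hx => (hder x).differentiableAt.differentiableWithinAt) ?_
        intro x hx
        rw [interior_Ici] at hx
        exact (hsign x).1 (le_of_lt hx)
      exact hanti (Set.self_mem_Ici) hC hC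
    · have hmono : MonotoneOn g (Set.Iic 0) := by
        refine monotoneOn_of_deriv_nonneg (convex_Iic 0) hcont.continuousOn
          (fun x hx => (hder x).differentiableAt.differentiableWithinAt) ?_
        intro x hx
        rw [interior_Iic] at hx
        exact (hsign x).2 (le_of_lt hx)
      exact hmono hC (Set.self_mem_Iic) hC
  have hg0 : g 0 = Fg τ 0 := by simp [hg]
  rw [hg0] at hmax
  have := mul_le_mul_of_nonneg_right hmax (Real.exp_pos (-(b * C))).le
  calc Fg τ C = Fg τ C * Real.exp (b * C) * Real.exp (-(b * C)) := by
        rw [mul_assoc, ← Real.exp_add]; simp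
    _ ≤ Fg τ 0 * Real.exp (-(b * C)) := this
    _ = Fg τ 0 * Real.exp (-b * C) := by ring_nf

lemma a_eq (τ : ℝ) (hτ : 0 < τ) :
    Real.sqrt π * Real.Gamma (τ + 1) / (2 ^ ((τ + 1) / 2) * Real.Gamma ((τ + 2) / 2)) = Fg τ 0 := by
  rw [Fg_zero τ (by linarith)]
  have hdup := Real.Gamma_mul_Gamma_add_half ((τ+1)/2)
  rw [show (τ+1)/2 + 1/2 = (τ+2)/2 by ring, show 2*((τ+1)/2) = τ + 1 by ring] at hdup
  have hG2 : (0:ℝ) < Real.Gamma ((τ+2)/2) := Real.Gamma_pos_of_pos (by linarith)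
  have hne : 2 ^ ((τ + 1) / 2) * Real.Gamma ((τ + 2) / 2) ≠ 0 := by positivity
  rw [div_eq_iff hne]
  rw [show 2 ^ ((τ-1)/2) * Real.Gamma ((τ+1)/2) * (2 ^ ((τ+1)/2) * Real.Gamma ((τ+2)/2))
      = ((2:ℝ) ^ ((τ-1)/2) * 2 ^ ((τ+1)/2)) * (Real.Gamma ((τ+1)/2) * Real.Gamma ((τ+2)/2)) by ring,
    hdup, ← Real.rpow_add two_pos, show (τ-1)/2 + (τ+1)/2 = τ by ring]
  have h1 : (2:ℝ) ^ τ * (2:ℝ) ^ (1 - (τ+1)) = 1 := by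
    rw [← Real.rpow_add two_pos, show τ + (1 - (τ+1)) = 0 by ring, Real.rpow_zero]
  linear_combination (-(Real.sqrt π * Real.Gamma (τ+1))) * h1

lemma b_eq (τ : ℝ) (hτ : 0 < τ) :
    τ * Fg (τ-1) 0 / Fg τ 0
      = Real.sqrt 2 * Real.Gamma ((τ+2)/2) / Real.Gamma ((τ+1)/2) := by
  rw [Fg_zero (τ-1) (by linarith), Fg_zero τ (by linarith)]
  rw [show (τ-1-1)/2 = (τ-2)/2 by ring, show (τ-1+1)/2 = τ/2 by ring]
  have hGrec : Real.Gamma ((τ+2)/2) = (τ/2) * Real.Gamma (τ/2) := by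
    rw [show (τ+2)/2 = τ/2 + 1 by ring, Real.Gamma_add_one (by positivity)]
  have hpow : (2:ℝ) ^ ((τ-2)/2) * Real.sqrt 2 = 2 ^ ((τ-1)/2) := by
    rw [Real.sqrt_eq_rpow, ← Real.rpow_add two_pos, show (τ-2)/2 + 1/2 = (τ-1)/2 by ring]
  have hG1 : (0:ℝ) < Real.Gamma ((τ+1)/2) := Real.Gamma_pos_of_pos (by linarith)
  have hp2 : (0:ℝ) < (2:ℝ) ^ ((τ-1)/2) := Real.rpow_pos_of_pos two_pos _
  rw [hGrec, div_eq_div_iff (by positivity) hG1.ne']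
  have h2 : Real.sqrt 2 * Real.sqrt 2 = 2 := Real.mul_self_sqrt (by norm_num)
  linear_combination ((τ/2) * Real.sqrt 2 * Real.Gamma (τ/2) * Real.Gamma ((τ+1)/2)) * hpow
    - ((τ/2) * (2:ℝ)^((τ-2)/2) * Real.Gamma (τ/2) * Real.Gamma ((τ+1)/2)) * h2


open Real

/-- Lemma 2 of the paper: the exponential bound
`∫_0^∞ r^τ exp(−(r+C)²/2) dr ≤ a_τ exp(−b_τ C)`. -/
theorem integral_rpow_gaussian_le
    (τ C : ℝ) (hτ : 0 < τ) :
    (∫ r in Set.Ioi (0 : ℝ), r ^ τ * Real.exp (-(r + C) ^ 2 / 2))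
      ≤ (Real.sqrt π * Real.Gamma (τ + 1) /
            (2 ^ ((τ + 1) / 2) * Real.Gamma ((τ + 2) / 2))) *
          Real.exp (-(Real.sqrt 2 * Real.Gamma ((τ + 2) / 2) /
            Real.Gamma ((τ + 1) / 2)) * C) := by
  have h := Fg_le τ C hτ
  rw [b_eq τ hτ, ← a_eq τ hτ] at h
  exact h
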